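/- arXiv:1503.05660 — 2 statements merged into one kernel-verified Lean document; each statement's English description precedes it below -/
import Mathlib

section
/- SU(n) has commutator length at most two: every T ∈ SU(n) can be written as a product of two commutators, i.e., there exist a, b, c, d ∈ SU(n) such that T = (aba⁻¹b⁻¹)(cdc⁻¹d⁻¹). -/
/-!
A unitary matrix `T` is unitarily diagonalisable: after multiplying it by a unit scalar so that
`-1` is no longer an eigenvalue, its Cayley transform `i (1 - T) (1 + T)⁻¹` is Hermitian, and the
spectral theorem for that Hermitian matrix diagonalises `T` as well.

A diagonal matrix `diag(e)` in `SU(n)` is the commutator of `diag(a)` and the permutation matrix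
of the cyclic shift `i ↦ i + 1`, where `aᵢ = eᵢ eᵢ₊₁ ⋯ eₙ₋₁` (so `aᵢ / aᵢ₊₁ = eᵢ`, and
`aₙ₋₁ / a₀ = eₙ₋₁` because `∏ eᵢ = 1`). Multiplying a unitary matrix by an `n`-th root of its
inverse determinant puts it in `SU(n)` and changes neither commutators nor conjugations, so every
element of `SU(n)` is a single commutator in `SU(n)`.
-/

open Matrix Complex
open scoped commutatorElement

theorem exists_eq_mul_comp_finRotate {M : Type*} [CommMonoid M] {n : ℕ} (e : Fin n → M)
    (he : ∏ i, e i = 1) : ∃ a : Fin n → M, ∀ i, a i = e i * a (finRotate n i) := by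
  refine ⟨fun i => ∏ k ∈ Finset.Ici i, e k, fun i => ?_⟩
  cases n with
  | zero => exact i.elim0
  | succ m =>
    induction i using Fin.lastCases with
    | last =>
      have huniv : Finset.Ici (0 : Fin (m + 1)) = Finset.univ := by ext; simp
      dsimp only
      rw [finRotate_last, huniv, he, mul_one, ← Fin.top_eq_last, Finset.Ici_top,
        Finset.prod_singleton]
    | cast j =>
      dsimp only
      rw [← Finset.mul_prod_Ioi_eq_prod_Ici, finRotate_apply, Fin.coeSucc_eq_succ]
      congr 2
      ext k
      simp [Fin.castSucc_lt_iff_succ_le]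

theorem RCLike.mem_unitary_iff_norm_eq_one {𝕜 : Type*} [RCLike 𝕜] {z : 𝕜} :
    z ∈ unitary 𝕜 ↔ ‖z‖ = 1 := by
  rw [Unitary.mem_iff_star_mul_self, star_def, RCLike.conj_mul, ← RCLike.ofReal_pow,
    ← RCLike.ofReal_one, RCLike.ofReal_inj, pow_eq_one_iff_of_nonneg (norm_nonneg z) two_ne_zero]

section UnitaryScalar

variable {R A : Type*} [CommMonoid R] [StarMul R] [Monoid A] [StarMul A] [MulAction R A]
  [SMulCommClass R A A] [IsScalarTower R A A] [StarModule R A]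

theorem smul_mul_mul_star_smul {z : R} (hz : z ∈ unitary R) (u x : A) :
    z • u * x * star (z • u) = u * x * star u := by
  rw [star_smul, smul_mul_assoc, smul_mul_assoc, mul_smul_comm, smul_smul,
    Unitary.mul_star_self_of_mem hz, one_smul]

theorem smul_mul_smul_mul_star_smul_mul_star_smul {z w : R} (hz : z ∈ unitary R)
    (hw : w ∈ unitary R) (a b : A) :
    z • a * (w • b) * star (z • a) * star (w • b) = a * b * star a * star b := by
  simp only [star_smul, smul_mul_assoc, mul_smul_comm, smul_smul]
  rw [show star w * (star z * (w * z)) = star z * z * (star w * w) by ac_rfl,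
    Unitary.star_mul_self_of_mem hz, Unitary.star_mul_self_of_mem hw, one_mul, one_smul]

end UnitaryScalar

namespace Matrix

variable {n : Type*} [Fintype n] [DecidableEq n]

theorem diagonal_mem_unitaryGroup_iff {α : Type*} [CommRing α] [StarRing α] {d : n → α} :
    diagonal d ∈ unitaryGroup n α ↔ ∀ i, d i ∈ unitary α := by
  simp only [mem_unitaryGroup_iff', Unitary.mem_iff_star_mul_self, star_eq_conjTranspose,
    diagonal_conjTranspose, diagonal_mul_diagonal, diagonal_eq_one, funext_iff]
  rfl

theorem permMatrix_mul_diagonal {R : Type*} [NonAssocSemiring R] (σ : Equiv.Perm n) (a : n → R) :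
    σ.permMatrix R * diagonal a = diagonal (a ∘ σ) * σ.permMatrix R := by
  ext i j
  rw [mul_diagonal, diagonal_mul]
  by_cases h : σ i = j <;> simp [PEquiv.toMatrix_apply, h]

theorem permMatrix_mem_unitaryGroup {α : Type*} [CommRing α] [StarRing α] (σ : Equiv.Perm n) :
    σ.permMatrix α ∈ unitaryGroup n α := by
  rw [mem_unitaryGroup_iff, star_eq_conjTranspose, conjTranspose_permMatrix, ← permMatrix_mul,
    inv_mul_cancel, permMatrix_one]

theorem exists_smul_mem_specialUnitaryGroup [Nonempty n] {M : Matrix n n ℂ}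
    (hM : M ∈ unitaryGroup n ℂ) : ∃ z ∈ unitary ℂ, z • M ∈ specialUnitaryGroup n ℂ := by
  have hdet : ‖M.det‖ = 1 := CStarRing.norm_of_mem_unitary (det_of_mem_unitary hM)
  obtain ⟨z, hz⟩ := IsAlgClosed.exists_pow_nat_eq (M.det)⁻¹ (Fintype.card_pos (α := n))
  have hzu : z ∈ unitary ℂ := by
    rw [RCLike.mem_unitary_iff_norm_eq_one,
      ← pow_eq_one_iff_of_nonneg (norm_nonneg z) (Fintype.card_ne_zero (α := n)), ← norm_pow,
      hz, norm_inv, hdet, inv_one]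
  refine ⟨z, hzu, mem_specialUnitaryGroup_iff.mpr ⟨Unitary.smul_mem_of_mem hzu hM, ?_⟩⟩
  rw [det_smul, hz, inv_mul_cancel₀ (norm_ne_zero_iff.mp (hdet ▸ one_ne_zero))]

theorem exists_norm_eq_one_isUnit_smul_one_add (T : Matrix n n ℂ) :
    ∃ l : ℂ, ‖l‖ = 1 ∧ IsUnit (l • 1 + T) := by
  have hsphere : (Metric.sphere (0 : ℂ) 1).Infinite :=
    (isPreconnected_sphere (by simp [Complex.rank_real_complex]) 0 1).infinite_of_nontrivial
      ⟨1, by simp, -1, by simp, by norm_num⟩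
  obtain ⟨l, hl, hlT⟩ := (hsphere.sdiff (-T).finite_spectrum).nonempty
  refine ⟨l, by simpa using hl, ?_⟩
  simpa [spectrum.mem_iff, Algebra.algebraMap_eq_smul_one] using hlT

noncomputable def cayley (S : Matrix n n ℂ) : Matrix n n ℂ := I • ((1 - S) * (1 + S)⁻¹)

theorem cayley_mul_one_add {S : Matrix n n ℂ} (h : IsUnit (1 + S)) :
    cayley S * (1 + S) = I • (1 - S) := by
  rw [cayley, smul_mul_assoc, Matrix.mul_assoc,
    nonsing_inv_mul _ ((isUnit_iff_isUnit_det _).mp h), Matrix.mul_one]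

theorem smul_one_add_cayley_mul {S : Matrix n n ℂ} (h : IsUnit (1 + S)) :
    (I • 1 + cayley S) * S = I • 1 - cayley S := by
  have hCS : cayley S * S = I • (1 - S) - cayley S := by
    rw [← cayley_mul_one_add h]; noncomm_ring
  rw [add_mul, hCS, smul_mul_assoc, Matrix.one_mul, smul_sub]
  abel

theorem isHermitian_cayley {S : Matrix n n ℂ} (hS : S ∈ unitaryGroup n ℂ) (h : IsUnit (1 + S)) :
    (cayley S).IsHermitian := by
  have hSS : star S * S = 1 := mem_unitaryGroup_iff'.mp hS
  have hQP : (1 - star S) * (1 + S) = S - star S := by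
    calc _ = 1 + S - star S - star S * S := by noncomm_ring
      _ = _ := by rw [hSS]; abel
  have hPQ : (1 + star S) * (1 - S) = star S - S := by
    calc _ = 1 - S + star S - star S * S := by noncomm_ring
      _ = _ := by rw [hSS]; abel
  refine h.star.mul_left_cancel (h.mul_right_cancel ?_)
  calc star (1 + S) * star (cayley S) * (1 + S) = star (cayley S * (1 + S)) * (1 + S) := by
        rw [star_mul]
    _ = star (1 + S) * (cayley S * (1 + S)) := by
        rw [cayley_mul_one_add h, star_smul, star_sub, star_add, star_one, smul_mul_assoc,
          mul_smul_comm, star_def, conj_I, hQP, hPQ, neg_smul, ← smul_neg, neg_sub]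
    _ = _ := by rw [Matrix.mul_assoc]

def IsUnitarilyDiagonalizable (S : Matrix n n ℂ) : Prop :=
  ∃ U ∈ unitaryGroup n ℂ, ∃ d : n → ℂ, S = U * diagonal d * star U

theorem isUnitarilyDiagonalizable_of_smul_one_add_mul_eq {H S : Matrix n n ℂ}
    (hH : H.IsHermitian) (hS : (I • 1 + H) * S = I • 1 - H) : IsUnitarilyDiagonalizable S := by
  set U := hH.eigenvectorUnitary
  set φ := Unitary.conjStarAlgAut ℂ (Matrix n n ℂ) U
  set r : n → ℂ := fun k => hH.eigenvalues k
  have hH' : H = φ (diagonal r) := hH.spectral_theorem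
  have hplus : I • 1 + H = φ (diagonal (fun k => I + r k)) := by
    rw [← diagonal_add, ← smul_one_eq_diagonal, map_add, map_smul, map_one, hH']
  have hminus : I • 1 - H = φ (diagonal (fun k => I - r k)) := by
    rw [← diagonal_sub, ← smul_one_eq_diagonal, map_sub, map_smul, map_one, hH']
  have hne : ∀ k, I + r k ≠ 0 := fun k h => by simpa [r] using congrArg Complex.im h
  have hunit : IsUnit (I • 1 + H) := by
    rw [hplus]
    exact (isUnit_diagonal.mpr (Pi.isUnit_iff.mpr fun k => (hne k).isUnit)).map φ
  refine ⟨U, U.2, fun k => (I - r k) / (I + r k), ?_⟩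
  rw [← Unitary.conjStarAlgAut_apply (S := ℂ)]
  refine hunit.mul_left_cancel ?_
  rw [hS, hplus, hminus, ← map_mul, diagonal_mul_diagonal]
  congr 2
  exact funext fun k => (mul_div_cancel₀ _ (hne k)).symm

theorem isUnitarilyDiagonalizable_of_mem_unitaryGroup {T : Matrix n n ℂ}
    (hT : T ∈ unitaryGroup n ℂ) : IsUnitarilyDiagonalizable T := by
  obtain ⟨l, hl, hlT⟩ := exists_norm_eq_one_isUnit_smul_one_add T
  have hl0 : l ≠ 0 := norm_ne_zero_iff.mp (hl ▸ one_ne_zero)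
  have hS : l⁻¹ • T ∈ unitaryGroup n ℂ := Unitary.smul_mem_of_mem
    (RCLike.mem_unitary_iff_norm_eq_one.mpr (by rw [norm_inv, hl, inv_one])) hT
  have hS1 : IsUnit (1 + l⁻¹ • T) := by
    have := hlT.smul (Units.mk0 l⁻¹ (inv_ne_zero hl0))
    rwa [Units.smul_mk0, smul_add, inv_smul_smul₀ hl0] at this
  obtain ⟨U, hU, d, hd⟩ := isUnitarilyDiagonalizable_of_smul_one_add_mul_eq
    (isHermitian_cayley hS hS1) (smul_one_add_cayley_mul hS1)
  refine ⟨U, hU, l • d, ?_⟩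
  rw [diagonal_smul, mul_smul_comm, smul_mul_assoc, ← hd, smul_inv_smul₀ hl0]

theorem IsUnitarilyDiagonalizable.exists_mem_specialUnitaryGroup [Nonempty n]
    {S : Matrix n n ℂ} (h : IsUnitarilyDiagonalizable S) :
    ∃ U ∈ specialUnitaryGroup n ℂ, ∃ d : n → ℂ, S = U * diagonal d * star U := by
  obtain ⟨U, hU, d, rfl⟩ := h
  obtain ⟨z, hz, hzU⟩ := exists_smul_mem_specialUnitaryGroup hU
  exact ⟨z • U, hzU, d, (smul_mul_mul_star_smul hz U _).symm⟩

theorem exists_mem_unitaryGroup_diagonal_eq_commutator {n : ℕ} {d : Fin n → ℂ}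
    (hd : diagonal d ∈ specialUnitaryGroup (Fin n) ℂ) :
    ∃ A ∈ unitaryGroup (Fin n) ℂ, ∃ B ∈ unitaryGroup (Fin n) ℂ,
      diagonal d = A * B * star A * star B := by
  obtain ⟨hdU, hdet⟩ := mem_specialUnitaryGroup_iff.mp hd
  set e : Fin n → unitary ℂ := fun i => ⟨d i, diagonal_mem_unitaryGroup_iff.mp hdU i⟩
  have he : ∏ i, e i = 1 := Subtype.ext (by simpa [e] using hdet)
  obtain ⟨a, ha⟩ := exists_eq_mul_comp_finRotate e he
  set σ := finRotate n
  refine ⟨diagonal (fun i => (a i : ℂ)), diagonal_mem_unitaryGroup_iff.mpr fun i => (a i).2,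
    σ.permMatrix ℂ, permMatrix_mem_unitaryGroup σ, ?_⟩
  have hσ : σ.permMatrix ℂ * star (σ.permMatrix ℂ) = 1 :=
    mem_unitaryGroup_iff.mp (permMatrix_mem_unitaryGroup σ)
  rw [star_eq_conjTranspose, diagonal_conjTranspose, Matrix.mul_assoc _ (σ.permMatrix ℂ),
    permMatrix_mul_diagonal, Matrix.mul_assoc, Matrix.mul_assoc (diagonal _), hσ, Matrix.mul_one,
    diagonal_mul_diagonal]
  congr 1
  funext i
  rw [show d i = e i from rfl, ha i, Function.comp_apply, Pi.star_apply, Submonoid.coe_mul,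
    mul_assoc, Unitary.mul_star_self_of_mem (a (σ i)).2, mul_one]

theorem exists_mem_specialUnitaryGroup_diagonal_eq_commutator {n : ℕ} {d : Fin n → ℂ}
    (hd : diagonal d ∈ specialUnitaryGroup (Fin n) ℂ) :
    ∃ A ∈ specialUnitaryGroup (Fin n) ℂ, ∃ B ∈ specialUnitaryGroup (Fin n) ℂ,
      diagonal d = A * B * star A * star B := by
  rcases isEmpty_or_nonempty (Fin n) with hn | hn
  · exact ⟨1, one_mem _, 1, one_mem _, Subsingleton.elim _ _⟩
  obtain ⟨A, hA, B, hB, hAB⟩ := exists_mem_unitaryGroup_diagonal_eq_commutator hd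
  obtain ⟨z, hz, hzA⟩ := exists_smul_mem_specialUnitaryGroup hA
  obtain ⟨w, hw, hwB⟩ := exists_smul_mem_specialUnitaryGroup hB
  exact ⟨z • A, hzA, w • B, hwB, by rw [smul_mul_smul_mul_star_smul_mul_star_smul hz hw, hAB]⟩

theorem specialUnitaryGroup.exists_commutatorElement_eq {n : ℕ}
    (g : specialUnitaryGroup (Fin n) ℂ) :
    ∃ a b : specialUnitaryGroup (Fin n) ℂ, ⁅a, b⁆ = g := by
  rcases isEmpty_or_nonempty (Fin n) with hn | hn
  · exact ⟨1, 1, Subsingleton.elim _ _⟩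
  obtain ⟨U, hU, d, hgd⟩ := (isUnitarilyDiagonalizable_of_mem_unitaryGroup
    (specialUnitaryGroup_le_unitaryGroup g.2)).exists_mem_specialUnitaryGroup
  set u : specialUnitaryGroup (Fin n) ℂ := ⟨U, hU⟩
  have hUU : star U * U = 1 := mem_unitaryGroup_iff'.mp (specialUnitaryGroup_le_unitaryGroup hU)
  have hd : ((u⁻¹ * g * u : specialUnitaryGroup (Fin n) ℂ) : Matrix (Fin n) (Fin n) ℂ)
      = diagonal d := by
    change star U * g * U = _
    rw [hgd, show star U * (U * diagonal d * star U) * U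
      = star U * U * diagonal d * (star U * U) by noncomm_ring, hUU, Matrix.one_mul,
      Matrix.mul_one]
  obtain ⟨A, hA, B, hB, hAB⟩ :=
    exists_mem_specialUnitaryGroup_diagonal_eq_commutator (hd ▸ (u⁻¹ * g * u).2)
  have hcomm : ⁅(⟨A, hA⟩ : specialUnitaryGroup (Fin n) ℂ), ⟨B, hB⟩⁆ = u⁻¹ * g * u :=
    Subtype.ext (hd.trans hAB).symm
  refine ⟨MulAut.conj u ⟨A, hA⟩, MulAut.conj u ⟨B, hB⟩, ?_⟩
  rw [← map_commutatorElement, hcomm, MulAut.conj_apply]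
  group

end Matrix

/-- `SU(n)` has commutator length at most two: every element is a product of
two commutators. -/
theorem su_commutator_length_two
    (n : ℕ)
    (T : Matrix (Fin n) (Fin n) ℂ)
    (hT : T ∈ Matrix.specialUnitaryGroup (Fin n) ℂ) :
    ∃ a b c d : Matrix (Fin n) (Fin n) ℂ,
      a ∈ Matrix.specialUnitaryGroup (Fin n) ℂ ∧
      b ∈ Matrix.specialUnitaryGroup (Fin n) ℂ ∧
      c ∈ Matrix.specialUnitaryGroup (Fin n) ℂ ∧
      d ∈ Matrix.specialUnitaryGroup (Fin n) ℂ ∧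
      T = (a * b * a⁻¹ * b⁻¹) * (c * d * c⁻¹ * d⁻¹) := by
  obtain ⟨a, b, hab⟩ := specialUnitaryGroup.exists_commutatorElement_eq ⟨T, hT⟩
  have hinv : ∀ x : specialUnitaryGroup (Fin n) ℂ, (x : Matrix (Fin n) (Fin n) ℂ)⁻¹ = ↑x⁻¹ :=
    fun x => inv_eq_left_inv (congrArg Subtype.val (inv_mul_cancel x))
  refine ⟨a, b, 1, 1, a.2, b.2, one_mem _, one_mem _, ?_⟩
  rw [hinv a, hinv b, inv_one, Matrix.mul_one, Matrix.mul_one, Matrix.mul_one, Matrix.mul_one]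
  exact congrArg Subtype.val hab.symm
end

section
/- Let T ∈ U(n,1) be a non-vertical translation, i.e., a unipotent element with (T − 1)³ = 0 and (T − 1)² ≠ 0. Then T is a product of two involutions in U(n,1); that is, there exist involutions J₁, J₂ ∈ U(n,1) with T = J₁J₂. -/
open Matrix

/-- The signature matrix `J = diag(-1, 1, …, 1)` of the Hermitian form on `ℂ^{n,1}`. -/
noncomputable def Jform (n : ℕ) : Matrix (Fin (n + 1)) (Fin (n + 1)) ℂ :=
  Matrix.diagonal (fun i => if i = 0 then (-1 : ℂ) else 1)

/-- Membership in `U(n,1)`: `Aᴴ J A = J`. -/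
def memU1 (n : ℕ) (A : Matrix (Fin (n + 1)) (Fin (n + 1)) ℂ) : Prop :=
  Aᴴ * Jform n * A = Jform n

/-- Membership in `SU(n,1)`: `Aᴴ J A = J` and `det A = 1`. -/
def memSU1 (n : ℕ) (A : Matrix (Fin (n + 1)) (Fin (n + 1)) ℂ) : Prop :=
  Aᴴ * Jform n * A = Jform n ∧ A.det = 1

/-!
Write `T = 1 + N`. For the form `⟨p, q⟩ = p* J q` the adjoint of `N` is `T⁻¹ - 1 = N² - N`, so
`N²` is self-adjoint with totally isotropic image. In signature `(n, 1)` isotropic lines are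
maximal, which forces `⟨x, N²x⟩ ≠ 0` for some `x`; shifting `x` by an imaginary multiple of `N x`
also makes `2 ⟨N x, x⟩ = ⟨x, N²x⟩`. The reflection `σ` in `u = N²x - 2 N x` then satisfies
`σ N σ = N² - N`, i.e. `σ T σ = T⁻¹`, so `T = σ (σ T)` with both factors involutions in `U(n,1)`.
-/

open scoped ComplexOrder

noncomputable def jInner {n : ℕ} (p q : Fin (n + 1) → ℂ) : ℂ :=
  star p ⬝ᵥ (Jform n *ᵥ q)

section JInner

variable {n : ℕ}

lemma Jform_conjTranspose : (Jform n)ᴴ = Jform n := by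
  simp only [Jform, diagonal_conjTranspose]
  congr 1
  funext i
  split_ifs with h <;> simp [h]

lemma Jform_mul_self : Jform n * Jform n = 1 := by
  rw [Jform, diagonal_mul_diagonal, ← diagonal_one]
  congr 1
  funext i
  split_ifs <;> norm_num

lemma star_Jform_mulVec_dotProduct (p q : Fin (n + 1) → ℂ) :
    star (Jform n *ᵥ p) ⬝ᵥ q = jInner p q := by
  rw [star_mulVec, ← dotProduct_mulVec, Jform_conjTranspose, jInner]

lemma jInner_conj (p q : Fin (n + 1) → ℂ) : starRingEnd ℂ (jInner p q) = jInner q p := by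
  rw [← star_Jform_mulVec_dotProduct, jInner, ← Complex.star_def, star_dotProduct, star_star]

lemma jInner_Jform_mulVec (p : Fin (n + 1) → ℂ) : jInner p (Jform n *ᵥ p) = star p ⬝ᵥ p := by
  rw [jInner, mulVec_mulVec, Jform_mul_self, one_mulVec]

@[simp] lemma jInner_add_left (p p' q : Fin (n + 1) → ℂ) :
    jInner (p + p') q = jInner p q + jInner p' q := by
  simp [jInner, star_add, add_dotProduct]

@[simp] lemma jInner_add_right (p q q' : Fin (n + 1) → ℂ) :
    jInner p (q + q') = jInner p q + jInner p q' := by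
  simp [jInner, mulVec_add, dotProduct_add]

@[simp] lemma jInner_sub_left (p p' q : Fin (n + 1) → ℂ) :
    jInner (p - p') q = jInner p q - jInner p' q := by
  simp [jInner, star_sub, sub_dotProduct]

@[simp] lemma jInner_sub_right (p q q' : Fin (n + 1) → ℂ) :
    jInner p (q - q') = jInner p q - jInner p q' := by
  simp [jInner, mulVec_sub, dotProduct_sub]

@[simp] lemma jInner_smul_left (c : ℂ) (p q : Fin (n + 1) → ℂ) :
    jInner (c • p) q = starRingEnd ℂ c * jInner p q := by
  simp [jInner, star_smul, smul_dotProduct]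

@[simp] lemma jInner_smul_right (c : ℂ) (p q : Fin (n + 1) → ℂ) :
    jInner p (c • q) = c * jInner p q := by
  simp [jInner, mulVec_smul, dotProduct_smul]

@[simp] lemma jInner_zero_right (p : Fin (n + 1) → ℂ) : jInner p 0 = 0 := by
  simp [jInner]

lemma jInner_mulVec_mulVec (A : Matrix (Fin (n + 1)) (Fin (n + 1)) ℂ) (p q : Fin (n + 1) → ℂ) :
    jInner (A *ᵥ p) (A *ᵥ q) = star p ⬝ᵥ ((Aᴴ * Jform n * A) *ᵥ q) := by
  rw [jInner, star_mulVec, ← dotProduct_mulVec, mulVec_mulVec, mulVec_mulVec]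

lemma memU1_iff (A : Matrix (Fin (n + 1)) (Fin (n + 1)) ℂ) :
    memU1 n A ↔ ∀ p q, jInner (A *ᵥ p) (A *ᵥ q) = jInner p q := by
  simp only [memU1, jInner_mulVec_mulVec]
  unfold jInner
  refine ⟨fun h p q => by rw [h], fun h => ext_iff_mulVec.2 fun q => ?_⟩
  have hd := h ((Aᴴ * Jform n * A) *ᵥ q - Jform n *ᵥ q) q
  rwa [← sub_eq_zero, ← dotProduct_sub, dotProduct_star_self_eq_zero, sub_eq_zero] at hd

lemma memU1_mul {A B : Matrix (Fin (n + 1)) (Fin (n + 1)) ℂ} (hA : memU1 n A) (hB : memU1 n B) :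
    memU1 n (A * B) := by
  rw [memU1_iff] at *
  intro p q
  rw [← mulVec_mulVec, ← mulVec_mulVec, hA, hB]

lemma eq_zero_of_jInner_self_eq_zero_of_apply_zero {p : Fin (n + 1) → ℂ} (hp0 : p 0 = 0)
    (hp : jInner p p = 0) : p = 0 := by
  have hJp : Jform n *ᵥ p = p := by
    funext i
    rcases eq_or_ne i 0 with rfl | hi <;> simp [Jform, mulVec_diagonal, *]
  rwa [jInner, hJp, dotProduct_star_self_eq_zero] at hp

/-- In signature `(n, 1)` a totally isotropic subspace is at most a line; the vector `z`
detects the coefficient of `v` along `e`. -/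
lemma eq_zero_of_isotropic_of_jInner_eq_zero {e v z : Fin (n + 1) → ℂ} (he : jInner e e = 0)
    (hv : jInner v v = 0) (hev : jInner e v = 0) (hvz : jInner v z = 0)
    (hez : jInner e z ≠ 0) : v = 0 := by
  have he0 : e 0 ≠ 0 := fun h0 => hez <| by
    rw [eq_zero_of_jInner_self_eq_zero_of_apply_zero h0 he, jInner, star_zero, zero_dotProduct]
  have hve : jInner v e = 0 := by rw [← jInner_conj, hev, map_zero]
  set c := v 0 / e 0
  have hvc : v = c • e := by
    rw [← sub_eq_zero]
    refine eq_zero_of_jInner_self_eq_zero_of_apply_zero ?_ ?_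
    · simp [c, he0]
    · simp [he, hv, hev, hve]
  rw [hvc, jInner_smul_left, mul_eq_zero, map_eq_zero] at hvz
  rw [hvc, hvz.resolve_right hez, zero_smul]

lemma exists_eq_add_smul_add_smul_of_jInner_eq_zero {a b p q : Fin (n + 1) → ℂ}
    (hap : jInner a p ≠ 0) (haq : jInner a q = 0) (hbq : jInner b q ≠ 0) (v : Fin (n + 1) → ℂ) :
    ∃ (w : Fin (n + 1) → ℂ) (α β : ℂ),
      jInner a w = 0 ∧ jInner b w = 0 ∧ v = w + α • p + β • q := by
  set α := jInner a v / jInner a p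
  set β := (jInner b v - α * jInner b p) / jInner b q
  refine ⟨v - α • p - β • q, α, β, ?_, ?_, by abel⟩
  · simp only [jInner_sub_right, jInner_smul_right, haq, α, div_mul_cancel₀ _ hap]
    ring
  · simp only [jInner_sub_right, jInner_smul_right, β, div_mul_cancel₀ _ hbq]
    ring

end JInner

section Reflection

variable {n : ℕ}

noncomputable def reflection (u : Fin (n + 1) → ℂ) : Matrix (Fin (n + 1)) (Fin (n + 1)) ℂ :=
  1 - (2 / jInner u u) • vecMulVec u (star (Jform n *ᵥ u))

lemma reflection_mulVec (u v : Fin (n + 1) → ℂ) :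
    reflection u *ᵥ v = v - (2 * jInner u v / jInner u u) • u := by
  rw [reflection, sub_mulVec, one_mulVec, smul_mulVec, vecMulVec_mulVec,
    star_Jform_mulVec_dotProduct, op_smul_eq_smul, smul_smul, div_mul_eq_mul_div]

lemma reflection_mulVec_of_jInner_eq_zero {u v : Fin (n + 1) → ℂ} (h : jInner u v = 0) :
    reflection u *ᵥ v = v := by
  rw [reflection_mulVec, h, mul_zero, zero_div, zero_smul, sub_zero]

lemma reflection_mul_self {u : Fin (n + 1) → ℂ} (hu : jInner u u ≠ 0) :
    reflection u * reflection u = 1 :=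
  ext_iff_mulVec.2 fun v => by
    rw [← mulVec_mulVec, one_mulVec, reflection_mulVec, reflection_mulVec]
    simp only [jInner_sub_right, jInner_smul_right, div_mul_cancel₀ _ hu]
    module

lemma memU1_reflection {u : Fin (n + 1) → ℂ} (hu : jInner u u ≠ 0) : memU1 n (reflection u) := by
  have hconj : starRingEnd ℂ (jInner u u) = jInner u u := jInner_conj u u
  refine (memU1_iff _).2 fun p q => ?_
  simp only [reflection_mulVec, jInner_sub_left, jInner_sub_right, jInner_smul_left,
    jInner_smul_right, map_div₀, map_mul, hconj, jInner_conj, map_ofNat]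
  field_simp
  ring

end Reflection

def IsJAdjointPair {n : ℕ} (A B : Matrix (Fin (n + 1)) (Fin (n + 1)) ℂ) : Prop :=
  ∀ p q, jInner (A *ᵥ p) q = jInner p (B *ᵥ q)

section Adjoint

variable {n : ℕ} {A A' B B' M : Matrix (Fin (n + 1)) (Fin (n + 1)) ℂ}

lemma IsJAdjointPair.mul (hA : IsJAdjointPair A A') (hB : IsJAdjointPair B B') :
    IsJAdjointPair (A * B) (B' * A') := fun p q => by
  rw [← mulVec_mulVec, ← mulVec_mulVec, hA, hB]

lemma jInner_mulVec_self_ne_zero (hM : IsJAdjointPair M M) (hM2 : M * M = 0)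
    {x : Fin (n + 1) → ℂ} (hx : M *ᵥ x ≠ 0) : jInner x (M *ᵥ x) ≠ 0 := by
  intro hx0
  have hMM : ∀ v, M *ᵥ (M *ᵥ v) = 0 := fun v => by rw [mulVec_mulVec, hM2, zero_mulVec]
  have hMM' : ∀ p q, jInner (M *ᵥ p) (M *ᵥ q) = 0 := fun p q => by
    rw [hM, hMM, jInner_zero_right]
  -- `M x` and `M (J M x)` lie on the isotropic image of `M`, and `⟨J M x, M x⟩ = ‖M x‖² ≠ 0`
  refine hx (eq_zero_of_isotropic_of_jInner_eq_zero (e := M *ᵥ (Jform n *ᵥ (M *ᵥ x))) (z := x)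
    (hMM' _ _) (hMM' _ _) (hMM' _ _) (by rwa [hM]) ?_)
  rw [hM, ← jInner_conj, map_ne_zero, jInner_Jform_mulVec, Ne, dotProduct_star_self_eq_zero]
  exact hx

end Adjoint

section Unipotent

variable {n : ℕ} {N : Matrix (Fin (n + 1)) (Fin (n + 1)) ℂ}

lemma mulVec_mulVec_mulVec_eq_zero (hN3 : N ^ 3 = 0) (v : Fin (n + 1) → ℂ) :
    N *ᵥ (N *ᵥ (N *ᵥ v)) = 0 := by
  rw [mulVec_mulVec, mulVec_mulVec, ← pow_three', hN3, zero_mulVec]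

/-- The inverse of `1 + N` is `1 - N + N * N`, so `(1 + N) ∈ U(n,1)` makes `N * N - N` the
adjoint of `N`. -/
lemma isJAdjointPair_of_memU1 (hT : memU1 n (1 + N)) (hN3 : N ^ 3 = 0) :
    IsJAdjointPair N (N * N - N) := fun p q => by
  have hq : (1 + N) *ᵥ (q - N *ᵥ q + N *ᵥ (N *ᵥ q)) = q := by
    simp only [add_mulVec, one_mulVec, mulVec_add, mulVec_sub, mulVec_mulVec_mulVec_eq_zero hN3]
    abel
  have h := (memU1_iff _).1 hT p (q - N *ᵥ q + N *ᵥ (N *ᵥ q))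
  rw [hq, add_mulVec, one_mulVec, jInner_add_left, jInner_add_right, jInner_sub_right] at h
  rw [sub_mulVec, ← mulVec_mulVec, jInner_sub_right]
  linear_combination h

lemma isJAdjointPair_mul_self (hN3 : N ^ 3 = 0) (hN : IsJAdjointPair N (N * N - N)) :
    IsJAdjointPair (N * N) (N * N) := by
  have h3 : N * N * N = 0 := by rw [← pow_three', hN3]
  have hsq : (N * N - N) * (N * N - N) = N * N := by
    calc (N * N - N) * (N * N - N) = N * N + N * N * N * N - 2 • (N * N * N) := by noncomm_ring
      _ = N * N := by rw [h3, zero_mul, smul_zero, add_zero, sub_zero]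
  simpa only [hsq] using hN.mul hN

lemma jInner_sq_left (hN3 : N ^ 3 = 0) (hN : IsJAdjointPair N (N * N - N))
    (p q : Fin (n + 1) → ℂ) : jInner (N *ᵥ (N *ᵥ p)) q = jInner p (N *ᵥ (N *ᵥ q)) := by
  simpa only [mulVec_mulVec] using isJAdjointPair_mul_self hN3 hN p q

lemma jInner_sq_sq (hN3 : N ^ 3 = 0) (hN : IsJAdjointPair N (N * N - N))
    (p q : Fin (n + 1) → ℂ) : jInner (N *ᵥ (N *ᵥ p)) (N *ᵥ (N *ᵥ q)) = 0 := by
  rw [jInner_sq_left hN3 hN, mulVec_mulVec_mulVec_eq_zero hN3, jInner_zero_right]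

lemma jInner_sq_mulVec (hN3 : N ^ 3 = 0) (hN : IsJAdjointPair N (N * N - N))
    (p q : Fin (n + 1) → ℂ) : jInner (N *ᵥ (N *ᵥ p)) (N *ᵥ q) = 0 := by
  rw [jInner_sq_left hN3 hN, mulVec_mulVec_mulVec_eq_zero hN3, jInner_zero_right]

lemma jInner_mulVec_mulVec_eq_neg (hN3 : N ^ 3 = 0) (hN : IsJAdjointPair N (N * N - N))
    (p q : Fin (n + 1) → ℂ) : jInner (N *ᵥ p) (N *ᵥ q) = -jInner p (N *ᵥ (N *ᵥ q)) := by
  rw [hN, sub_mulVec, ← mulVec_mulVec, mulVec_mulVec_mulVec_eq_zero hN3, jInner_sub_right,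
    jInner_zero_right, zero_sub]

lemma jInner_self_sq_sub_two_smul (hN3 : N ^ 3 = 0) (hN : IsJAdjointPair N (N * N - N))
    (x : Fin (n + 1) → ℂ) :
    jInner (N *ᵥ (N *ᵥ x) - (2 : ℂ) • (N *ᵥ x)) (N *ᵥ (N *ᵥ x) - (2 : ℂ) • (N *ᵥ x)) =
      -4 * jInner x (N *ᵥ (N *ᵥ x)) := by
  have h21 : jInner (N *ᵥ x) (N *ᵥ (N *ᵥ x)) = 0 := by
    rw [← jInner_conj, jInner_sq_mulVec hN3 hN, map_zero]
  simp only [jInner_sub_left, jInner_sub_right, jInner_smul_left, jInner_smul_right,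
    jInner_sq_sq hN3 hN, jInner_sq_mulVec hN3 hN, h21, jInner_mulVec_mulVec_eq_neg hN3 hN,
    map_ofNat]
  ring

lemma exists_jInner_sq_ne_zero (hN3 : N ^ 3 = 0) (hN : IsJAdjointPair N (N * N - N))
    (hN2 : N * N ≠ 0) : ∃ x : Fin (n + 1) → ℂ, jInner x (N *ᵥ (N *ᵥ x)) ≠ 0 := by
  obtain ⟨x, hx⟩ : ∃ x, (N * N) *ᵥ x ≠ 0 := by
    by_contra! h
    exact hN2 (ext_iff_mulVec.2 fun v => by rw [h v, zero_mulVec])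
  have hN4 : N * N * (N * N) = 0 := by rw [← mul_assoc, ← pow_three', hN3, zero_mul]
  refine ⟨x, ?_⟩
  simpa only [mulVec_mulVec] using
    jInner_mulVec_self_ne_zero (isJAdjointPair_mul_self hN3 hN) hN4 hx

/-- Replacing `x` by `x + a • N x` with `a` imaginary leaves `⟨x, N²x⟩` unchanged and moves
`⟨N x, x⟩`, whose real part is always `⟨x, N²x⟩ / 2`, onto the real axis. -/
lemma exists_jInner_sq_ne_zero_and_two_mul_jInner_eq (hN3 : N ^ 3 = 0)
    (hN : IsJAdjointPair N (N * N - N)) (hN2 : N * N ≠ 0) :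
    ∃ x : Fin (n + 1) → ℂ, jInner x (N *ᵥ (N *ᵥ x)) ≠ 0 ∧
      2 * jInner (N *ᵥ x) x = jInner x (N *ᵥ (N *ᵥ x)) := by
  obtain ⟨x, hx⟩ := exists_jInner_sq_ne_zero hN3 hN hN2
  have hδ : starRingEnd ℂ (jInner x (N *ᵥ (N *ᵥ x))) = jInner x (N *ᵥ (N *ᵥ x)) := by
    rw [jInner_conj, jInner_sq_left hN3 hN]
  have hg : jInner (N *ᵥ x) x + starRingEnd ℂ (jInner (N *ᵥ x) x) =
      jInner x (N *ᵥ (N *ᵥ x)) := by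
    rw [jInner_conj, hN, sub_mulVec, ← mulVec_mulVec, jInner_sub_right, sub_add_cancel]
  obtain ⟨a, ha⟩ : ∃ a : ℂ, a = (jInner (N *ᵥ x) x - starRingEnd ℂ (jInner (N *ᵥ x) x)) /
      (4 * jInner x (N *ᵥ (N *ᵥ x))) := ⟨_, rfl⟩
  have ha_conj : starRingEnd ℂ a = -a := by
    rw [ha, map_div₀, map_sub, map_mul, Complex.conj_conj, hδ, map_ofNat]
    ring
  have ha_mul : 4 * jInner x (N *ᵥ (N *ᵥ x)) * a =
      jInner (N *ᵥ x) x - starRingEnd ℂ (jInner (N *ᵥ x) x) := by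
    rw [ha, mul_div_cancel₀ _ (mul_ne_zero four_ne_zero hx)]
  refine ⟨x + a • (N *ᵥ x), ?_, ?_⟩ <;>
    simp only [mulVec_add, mulVec_smul, jInner_add_left, jInner_add_right, jInner_smul_left,
      jInner_smul_right, jInner_mulVec_mulVec_eq_neg hN3 hN, jInner_sq_left hN3 hN,
      mulVec_mulVec_mulVec_eq_zero hN3, jInner_zero_right, smul_zero, ha_conj]
  · simpa using hx
  · linear_combination hg - ha_mul

lemma mulVec_eq_zero_of_jInner_eq_zero (hN3 : N ^ 3 = 0) (hN : IsJAdjointPair N (N * N - N))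
    {x w : Fin (n + 1) → ℂ} (hx : jInner x (N *ᵥ (N *ᵥ x)) ≠ 0)
    (hw₁ : jInner (N *ᵥ (N *ᵥ x)) w = 0) (hw₂ : jInner (N *ᵥ x) w = 0) : N *ᵥ w = 0 := by
  have hxe : jInner (N *ᵥ (N *ᵥ x)) x ≠ 0 := by rwa [jInner_sq_left hN3 hN]
  have hNNw : N *ᵥ (N *ᵥ w) = 0 := by
    refine eq_zero_of_isotropic_of_jInner_eq_zero (jInner_sq_sq hN3 hN x x)
      (jInner_sq_sq hN3 hN w w) (jInner_sq_sq hN3 hN x w) ?_ hxe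
    rw [jInner_sq_left hN3 hN, ← jInner_conj, hw₁, map_zero]
  refine eq_zero_of_isotropic_of_jInner_eq_zero (jInner_sq_sq hN3 hN x x) ?_
    (jInner_sq_mulVec hN3 hN x w) ?_ hxe
  · rw [jInner_mulVec_mulVec_eq_neg hN3 hN, hNNw, jInner_zero_right, neg_zero]
  · rw [hN, sub_mulVec, ← mulVec_mulVec, jInner_sub_right, ← jInner_conj, hw₁,
      ← jInner_conj (N *ᵥ x), hw₂, map_zero, sub_zero]

/-- On the cyclic basis `x, N x, N²x` the reflection in `u` fixes `x` and `N²x` and sends `N x`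
to `N²x - N x`, which intertwines `N` with its adjoint; `N` kills everything `J`-orthogonal to
`N x` and `N²x`. -/
lemma reflection_mul_mul_reflection (hN3 : N ^ 3 = 0) (hN : IsJAdjointPair N (N * N - N))
    {x : Fin (n + 1) → ℂ} (hx : jInner x (N *ᵥ (N *ᵥ x)) ≠ 0)
    (hnorm : 2 * jInner (N *ᵥ x) x = jInner x (N *ᵥ (N *ᵥ x))) :
    reflection (N *ᵥ (N *ᵥ x) - (2 : ℂ) • (N *ᵥ x)) * N *
        reflection (N *ᵥ (N *ᵥ x) - (2 : ℂ) • (N *ᵥ x)) = N * N - N := by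
  set e₁ := N *ᵥ (N *ᵥ x)
  set e₂ := N *ᵥ x
  set σ := reflection (e₁ - (2 : ℂ) • e₂)
  have h₁₁ : jInner e₁ e₁ = 0 := jInner_sq_sq hN3 hN x x
  have h₁₂ : jInner e₁ e₂ = 0 := jInner_sq_mulVec hN3 hN x x
  have h₂₁ : jInner e₂ e₁ = 0 := by rw [← jInner_conj, h₁₂, map_zero]
  have h₂₂ : jInner e₂ e₂ = -jInner x e₁ := jInner_mulVec_mulVec_eq_neg hN3 hN x x
  have h₁x : jInner e₁ x = jInner x e₁ := jInner_sq_left hN3 hN x x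
  have huu : jInner (e₁ - (2 : ℂ) • e₂) (e₁ - (2 : ℂ) • e₂) = -4 * jInner x e₁ :=
    jInner_self_sq_sub_two_smul hN3 hN x
  have hσe₁ : σ *ᵥ e₁ = e₁ :=
    reflection_mulVec_of_jInner_eq_zero (by simp [h₁₁, h₂₁])
  have hσx : σ *ᵥ x = x :=
    reflection_mulVec_of_jInner_eq_zero (by simp only [jInner_sub_left, jInner_smul_left,
      h₁x, map_ofNat, hnorm, sub_self])
  have hσe₂ : σ *ᵥ e₂ = e₁ - e₂ := by
    have hcoeff : 2 * jInner (e₁ - (2 : ℂ) • e₂) e₂ / (-4 * jInner x e₁) = -1 := by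
      simp only [jInner_sub_left, jInner_smul_left, h₁₂, h₂₂, map_ofNat]
      field_simp
      ring
    rw [reflection_mulVec, huu, hcoeff]
    module
  have hσw : ∀ w, jInner e₁ w = 0 → jInner e₂ w = 0 → σ *ᵥ w = w := fun w h₁ h₂ =>
    reflection_mulVec_of_jInner_eq_zero (by simp [h₁, h₂])
  have hNx : N *ᵥ x = e₂ := rfl
  have hNe₂ : N *ᵥ e₂ = e₁ := rfl
  have hNe₁ : N *ᵥ e₁ = 0 := mulVec_mulVec_mulVec_eq_zero hN3 x
  refine ext_iff_mulVec.2 fun v => ?_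
  obtain ⟨w, α, β, hw₁, hw₂, rfl⟩ := exists_eq_add_smul_add_smul_of_jInner_eq_zero
    (a := e₁) (b := e₂) (p := x) (q := e₂) (by rwa [h₁x]) h₁₂ (by simpa [h₂₂] using hx) v
  have hNw := mulVec_eq_zero_of_jInner_eq_zero hN3 hN hx hw₁ hw₂
  simp only [← mulVec_mulVec, sub_mulVec, mulVec_add, mulVec_smul, hσw w hw₁ hw₂, hσx, hσe₂,
    hNw, hNx, hNe₂, mulVec_sub, hNe₁, hσe₁, mulVec_zero]
  module

lemma exists_memU1_involution_mul_mul_eq (hN3 : N ^ 3 = 0) (hN : IsJAdjointPair N (N * N - N))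
    (hN2 : N * N ≠ 0) :
    ∃ σ, memU1 n σ ∧ σ * σ = 1 ∧ σ * N * σ = N * N - N := by
  obtain ⟨x, hx, hnorm⟩ := exists_jInner_sq_ne_zero_and_two_mul_jInner_eq hN3 hN hN2
  have hu0 :
      jInner (N *ᵥ (N *ᵥ x) - (2 : ℂ) • (N *ᵥ x)) (N *ᵥ (N *ᵥ x) - (2 : ℂ) • (N *ᵥ x)) ≠ 0 := by
    rw [jInner_self_sq_sub_two_smul hN3 hN x]
    exact mul_ne_zero (by norm_num) hx
  exact ⟨_, memU1_reflection hu0, reflection_mul_self hu0,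
    reflection_mul_mul_reflection hN3 hN hx hnorm⟩

end Unipotent

theorem nonvertical_translation_product_two_involutions_general
    (n : ℕ)
    (T : Matrix (Fin (n + 1)) (Fin (n + 1)) ℂ)
    (hT : memU1 n T)
    (hunip : (T - 1) ^ 3 = 0) (hne : (T - 1) ^ 2 ≠ 0) :
    ∃ J₁ J₂ : Matrix (Fin (n + 1)) (Fin (n + 1)) ℂ,
      memU1 n J₁ ∧ memU1 n J₂ ∧
      J₁ * J₁ = 1 ∧ J₂ * J₂ = 1 ∧
      T = J₁ * J₂ := by
  set N := T - 1
  have hTN : T = 1 + N := (add_sub_cancel 1 T).symm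
  have hN : IsJAdjointPair N (N * N - N) := isJAdjointPair_of_memU1 (hTN ▸ hT) hunip
  obtain ⟨σ, hσ, hσσ, hσN⟩ := exists_memU1_involution_mul_mul_eq hunip hN (by rwa [← sq])
  refine ⟨σ, σ * T, hσ, memU1_mul hσ hT, hσσ, ?_, by rw [← mul_assoc, hσσ, one_mul]⟩
  calc σ * T * (σ * T) = (σ * σ + σ * N * σ) * (1 + N) := by rw [hTN]; noncomm_ring
    _ = 1 + N ^ 3 := by rw [hσσ, hσN]; noncomm_ring
    _ = 1 := by rw [hunip, add_zero]

/-- A non-vertical translation (unipotent with `(T-1)³ = 0`, `(T-1)² ≠ 0`) in `U(n,1)`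
is a product of two involutions in `U(n,1)`. -/
theorem nonvertical_translation_product_two_involutions
    (n : ℕ) (hn : 1 ≤ n)
    (T : Matrix (Fin (n + 1)) (Fin (n + 1)) ℂ)
    (hT : memU1 n T)
    (hunip : (T - 1) ^ 3 = 0) (hne : (T - 1) ^ 2 ≠ 0) :
    ∃ J₁ J₂ : Matrix (Fin (n + 1)) (Fin (n + 1)) ℂ,
      memU1 n J₁ ∧ memU1 n J₂ ∧
      J₁ * J₁ = 1 ∧ J₂ * J₂ = 1 ∧
      T = J₁ * J₂ :=
  nonvertical_translation_product_two_involutions_general n T hT hunip hne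
end
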